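/- Let Θ be exponential with rate λ > 0 and let Z be an independent zero-mean Laplace random variable with E[|Z|] = D > 0 (density (1/(2D))e^{−|z|/D}). Then E[|Θ + Z|] = 1/λ + λD²/(λD + 1). -/

import Mathlib

open MeasureTheory Set Filter Real Topology

/-- derivative of `x ↦ exp (c*x) * (a*x+b)`. -/
lemma hasDerivAt_exp_linear (c a b x : ℝ) :
    HasDerivAt (fun z => Real.exp (c * z) * (a * z + b))
      (Real.exp (c * x) * (c * (a * x + b) + a)) x := by
  have h1 : HasDerivAt (fun z : ℝ => c * z) c x := by
    simpa using (hasDerivAt_id x).const_mul c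
  have h2 : HasDerivAt (fun z : ℝ => a * z + b) a x := by
    simpa using ((hasDerivAt_id x).const_mul a).add_const b
  have := (h1.exp).mul h2
  exact this.congr_deriv (by ring)

lemma tendsto_exp_linear (c a b : ℝ) (hc : c < 0) :
    Tendsto (fun z => Real.exp (c * z) * (a * z + b)) atTop (𝓝 0) := by
  have hid : Tendsto (fun z : ℝ => -c * z) atTop atTop :=
    Tendsto.const_mul_atTop (by linarith) tendsto_id
  have h0 : Tendsto (fun y : ℝ => y * Real.exp (-y)) atTop (𝓝 0) := by
    simpa using Real.tendsto_pow_mul_exp_neg_atTop_nhds_zero 1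
  have h1 : Tendsto (fun z : ℝ => (-c * z) * Real.exp (-(-c * z))) atTop (𝓝 0) :=
    h0.comp hid
  have h2 : Tendsto (fun z : ℝ => z * Real.exp (c * z)) atTop (𝓝 0) := by
    have := h1.const_mul (-1 / c)
    rw [mul_zero] at this
    refine this.congr fun z => ?_
    have hc' : c ≠ 0 := ne_of_lt hc
    have hne : -(-c * z) = c * z := by ring
    rw [hne]
    field_simp
  have h3 : Tendsto (fun z : ℝ => Real.exp (c * z)) atTop (𝓝 0) := by
    apply Real.tendsto_exp_atBot.comp
    exact Tendsto.const_mul_atTop_of_neg hc tendsto_id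
  have := (h2.const_mul a).add (h3.const_mul b)
  simpa using this.congr fun z => by ring

lemma integrableOn_exp_linear (c a b x0 : ℝ) (hc : c < 0)
    (hnn : ∀ x ∈ Set.Ioi x0, 0 ≤ c * (a * x + b) + a) :
    IntegrableOn (fun x => Real.exp (c * x) * (c * (a * x + b) + a)) (Set.Ioi x0) := by
  refine integrableOn_Ioi_deriv_of_nonneg' (g := fun z => Real.exp (c * z) * (a * z + b))
    (fun x _ => hasDerivAt_exp_linear c a b x) ?_ (tendsto_exp_linear c a b hc)
  intro x hx
  exact mul_nonneg (Real.exp_pos _).le (hnn x hx)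

lemma integral_Ioi_exp_linear (c a b x0 : ℝ) (hc : c < 0)
    (hnn : ∀ x ∈ Set.Ioi x0, 0 ≤ c * (a * x + b) + a) :
    ∫ x in Set.Ioi x0, Real.exp (c * x) * (c * (a * x + b) + a)
      = -(Real.exp (c * x0) * (a * x0 + b)) := by
  have := integral_Ioi_of_hasDerivAt_of_nonneg'
    (g := fun z => Real.exp (c * z) * (a * z + b))
    (fun x _ => hasDerivAt_exp_linear c a b x)
    (fun x hx => mul_nonneg (Real.exp_pos _).le (hnn x hx))
    (tendsto_exp_linear c a b hc)
  simpa using this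

lemma integrableOn_Iic_of_comp_neg {f : ℝ → ℝ} {c : ℝ}
    (h : IntegrableOn (fun x => f (-x)) (Set.Ioi (-c))) :
    IntegrableOn f (Set.Iic c) := by
  have A : MeasurableEmbedding fun x : ℝ => -x :=
    (Homeomorph.neg ℝ).isClosedEmbedding.measurableEmbedding
  have hmap : (volume : Measure ℝ).restrict (Set.Iic c)
      = Measure.map (fun x : ℝ => -x) ((volume : Measure ℝ).restrict (Set.Ici (-c))) := by
    rw [show Set.Ici (-c) = (fun x : ℝ => -x) ⁻¹' Set.Iic c by ext x; simp,
      ← Measure.restrict_map A.measurable measurableSet_Iic,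
      Measure.map_neg_eq_self (volume : Measure ℝ)]
  rw [IntegrableOn, hmap, A.integrable_map_iff]
  have h' : IntegrableOn (fun x => f (-x)) (Set.Ici (-c)) :=
    (integrableOn_Ici_iff_integrableOn_Ioi).mpr h
  exact h'

/-- The inner integral: for `θ > 0`,
`∫ z, |θ+z| * (1/(2D)) exp(-|z|/D) = θ + D exp(-θ/D)`. -/
lemma inner_integral (D θ : ℝ) (hD : 0 < D) (hθ : 0 < θ) :
    ∫ z, |θ + z| * ((1 / (2 * D)) * Real.exp (-|z| / D))
      = θ + D * Real.exp (-θ / D) := by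
  have hD' : D ≠ 0 := ne_of_gt hD
  set f : ℝ → ℝ := fun z => |θ + z| * ((1 / (2 * D)) * Real.exp (-|z| / D)) with hf
  have hc : (-1 / D : ℝ) < 0 := div_neg_of_neg_of_pos (by norm_num) hD
  -- Piece C : ∫ z in Ioi 0, f z = θ/2 + D/2
  have hCeq : EqOn f (fun z => Real.exp ((-1/D) * z) *
      ((-1/D) * ((-1/2) * z + (-θ/2 - D/2)) + (-1/2))) (Set.Ioi 0) := by
    intro z hz
    simp only [Set.mem_Ioi] at hz
    have h1 : |θ + z| = θ + z := abs_of_pos (by linarith)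
    have h2 : |z| = z := abs_of_pos hz
    simp only [hf, h1, h2]
    rw [show -z / D = (-1/D) * z by ring]
    field_simp
    ring
  have hCnn : ∀ x ∈ Set.Ioi (0:ℝ), 0 ≤ (-1/D) * ((-1/2) * x + (-θ/2 - D/2)) + (-1/2) := by
    intro x hx
    simp only [Set.mem_Ioi] at hx
    have : (-1/D) * ((-1/2) * x + (-θ/2 - D/2)) + (-1/2) = (θ + x) / (2 * D) := by
      field_simp; ring
    rw [this]
    positivity
  have hCint : IntegrableOn f (Set.Ioi 0) :=
    (integrableOn_exp_linear (-1/D) (-1/2) (-θ/2 - D/2) 0 hc hCnn).congr_fun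
      (fun x hx => (hCeq hx).symm) measurableSet_Ioi
  have hC : ∫ z in Set.Ioi (0:ℝ), f z = θ/2 + D/2 := by
    rw [setIntegral_congr_fun measurableSet_Ioi hCeq,
      integral_Ioi_exp_linear _ _ _ _ hc hCnn]
    simp
    ring
  -- Piece A : ∫ z in Iic (-θ), f z = (D/2) * exp (-θ/D)
  have hAeq : EqOn (fun z => f (-z)) (fun z => Real.exp ((-1/D) * z) *
      ((-1/D) * ((-1/2) * z + (θ/2 - D/2)) + (-1/2))) (Set.Ioi θ) := by
    intro z hz
    simp only [Set.mem_Ioi] at hz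
    have h1 : |θ + -z| = z - θ := by rw [abs_of_neg (by linarith)]; ring
    have h2 : |(-z : ℝ)| = z := by rw [abs_neg, abs_of_pos (by linarith)]
    simp only [hf, h1, h2]
    rw [show -z / D = (-1/D) * z by ring]
    field_simp
    ring
  have hAnn : ∀ x ∈ Set.Ioi θ, 0 ≤ (-1/D) * ((-1/2) * x + (θ/2 - D/2)) + (-1/2) := by
    intro x hx
    simp only [Set.mem_Ioi] at hx
    have : (-1/D) * ((-1/2) * x + (θ/2 - D/2)) + (-1/2) = (x - θ) / (2 * D) := by
      field_simp; ring
    rw [this]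
    have : 0 ≤ x - θ := by linarith
    positivity
  have hAint : IntegrableOn f (Set.Iic (-θ)) := by
    apply integrableOn_Iic_of_comp_neg
    rw [neg_neg]
    exact (integrableOn_exp_linear (-1/D) (-1/2) (θ/2 - D/2) θ hc hAnn).congr_fun
      (fun x hx => (hAeq hx).symm) measurableSet_Ioi
  have hA : ∫ z in Set.Iic (-θ), f z = (D/2) * Real.exp (-θ/D) := by
    rw [← integral_comp_neg_Ioi, setIntegral_congr_fun measurableSet_Ioi hAeq,
      integral_Ioi_exp_linear _ _ _ _ hc hAnn]
    rw [show (-1/D) * θ = -θ/D by ring]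
    ring
  -- Piece B : ∫ z in Ioc (-θ) 0, f z = θ/2 - D/2 + (D/2) * exp (-θ/D)
  have hfc : Continuous f := by
    apply Continuous.mul
    · exact (continuous_const.add continuous_id).abs
    · exact continuous_const.mul ((continuous_abs.neg.div_const D).rexp)
  have hBint : IntegrableOn f (Set.Ioc (-θ) 0) := hfc.integrableOn_Ioc
  have hB : ∫ z in Set.Ioc (-θ) (0:ℝ), f z = θ/2 - D/2 + (D/2) * Real.exp (-θ/D) := by
    have hBeq : EqOn f (fun z => Real.exp ((1/D) * z) *
        ((1/D) * ((1/2) * z + (θ/2 - D/2)) + (1/2))) (Set.Ioc (-θ) 0) := by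
      intro z hz
      obtain ⟨hz1, hz2⟩ := hz
      have h1 : |θ + z| = θ + z := abs_of_pos (by linarith)
      have h2 : |z| = -z := abs_of_nonpos hz2
      simp only [hf, h1, h2]
      rw [show -(-z) / D = (1/D) * z by ring]
      field_simp
      ring
    rw [setIntegral_congr_fun measurableSet_Ioc hBeq,
      ← intervalIntegral.integral_of_le (by linarith : (-θ:ℝ) ≤ 0)]
    have hftc := intervalIntegral.integral_eq_sub_of_hasDerivAt
      (f := fun z => Real.exp ((1/D) * z) * ((1/2) * z + (θ/2 - D/2)))
      (f' := fun z => Real.exp ((1/D) * z) * ((1/D) * ((1/2) * z + (θ/2 - D/2)) + (1/2)))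
      (a := -θ) (b := 0)
      (fun x _ => hasDerivAt_exp_linear (1/D) (1/2) (θ/2 - D/2) x) ?_
    · rw [hftc]
      have h0 : (1/D) * (-θ) = -θ/D := by ring
      simp only [h0, mul_zero, Real.exp_zero, one_mul]
      ring
    · apply Continuous.intervalIntegrable
      fun_prop
  -- assemble
  have hIicInt : IntegrableOn f (Set.Iic 0) := by
    have := hAint.union hBint
    rwa [Set.Iic_union_Ioc_eq_Iic (by linarith : (-θ:ℝ) ≤ 0)] at this
  have hsplit0 : ∫ z, f z = (∫ z in Set.Iic (0:ℝ), f z) + ∫ z in Set.Ioi (0:ℝ), f z :=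
    (intervalIntegral.integral_Iic_add_Ioi hIicInt hCint).symm
  have hsplit1 : ∫ z in Set.Iic (0:ℝ), f z
      = (∫ z in Set.Iic (-θ), f z) + ∫ z in Set.Ioc (-θ) (0:ℝ), f z := by
    rw [← setIntegral_union (Set.Iic_disjoint_Ioc le_rfl) measurableSet_Ioc hAint hBint,
      Set.Iic_union_Ioc_eq_Iic (by linarith : (-θ:ℝ) ≤ 0)]
  rw [hsplit0, hsplit1, hA, hB, hC]
  ring

/-- For `Θ` exponential with rate `λ > 0` and an independent zero-mean Laplace
variable `Z` with `E[|Z|] = D > 0`, one has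
`E[|Θ + Z|] = 1/λ + λD²/(λD + 1)`, written as an iterated integral against the
product of the two densities. -/
theorem exp_plus_laplace_abs_moment (lam D : ℝ) (hlam : 0 < lam) (hD : 0 < D) :
    ∫ θ in Set.Ioi (0 : ℝ),
        (∫ z, |θ + z| * ((1 / (2 * D)) * Real.exp (-|z| / D))) *
          (lam * Real.exp (-lam * θ)) =
      1 / lam + lam * D ^ 2 / (lam * D + 1) := by
  have hlam' : lam ≠ 0 := ne_of_gt hlam
  have hD' : D ≠ 0 := ne_of_gt hD
  have hc1 : (-lam : ℝ) < 0 := by linarith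
  have hc2 : (-(lam + 1/D) : ℝ) < 0 := by
    have : (0:ℝ) < 1/D := by positivity
    linarith
  -- rewrite integrand using inner_integral
  have hcongr : EqOn
      (fun θ => (∫ z, |θ + z| * ((1 / (2 * D)) * Real.exp (-|z| / D))) *
          (lam * Real.exp (-lam * θ)))
      (fun θ => (Real.exp ((-lam) * θ) * ((-lam) * ((-1) * θ + (-1/lam)) + (-1)))
        + (Real.exp ((-(lam + 1/D)) * θ) *
            ((-(lam + 1/D)) * (0 * θ + (-(D * lam)/(lam + 1/D))) + 0))) (Set.Ioi 0) := by
    intro θ hθ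
    simp only [Set.mem_Ioi] at hθ
    beta_reduce
    rw [inner_integral D θ hD hθ]
    have hne : lam + 1/D ≠ 0 := ne_of_gt (by positivity)
    have hexp : Real.exp ((-(lam + 1/D)) * θ) = Real.exp (-θ/D) * Real.exp (-lam * θ) := by
      rw [← Real.exp_add]; ring_nf
    rw [hexp]
    field_simp
    ring
  have hnn1 : ∀ x ∈ Set.Ioi (0:ℝ), 0 ≤ (-lam) * ((-1) * x + (-1/lam)) + (-1) := by
    intro x hx
    simp only [Set.mem_Ioi] at hx
    have : (-lam) * ((-1) * x + (-1/lam)) + (-1) = lam * x := by field_simp; ring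
    rw [this]; positivity
  have hnn2 : ∀ x ∈ Set.Ioi (0:ℝ),
      0 ≤ (-(lam + 1/D)) * (0 * x + (-(D * lam)/(lam + 1/D))) + 0 := by
    intro x _
    have hne : lam + 1/D ≠ 0 := ne_of_gt (by positivity)
    have : (-(lam + 1/D)) * (0 * x + (-(D * lam)/(lam + 1/D))) + 0 = D * lam := by
      field_simp
      ring
    rw [this]; positivity
  rw [setIntegral_congr_fun measurableSet_Ioi hcongr,
    integral_add (integrableOn_exp_linear _ _ _ _ hc1 hnn1)
      (integrableOn_exp_linear _ _ _ _ hc2 hnn2),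
    integral_Ioi_exp_linear _ _ _ _ hc1 hnn1, integral_Ioi_exp_linear _ _ _ _ hc2 hnn2]
  have hne : lam + 1/D ≠ 0 := ne_of_gt (by positivity)
  have hne2 : lam * D + 1 ≠ 0 := ne_of_gt (by positivity)
  simp only [mul_zero, zero_mul, zero_add, Real.exp_zero, one_mul]
  have e1 : -(-1/lam) = 1/lam := by ring
  have e2 : -(-(D*lam)/(lam + 1/D)) = (D*lam)/(lam + 1/D) := by ring
  rw [e1, e2]
  congr 1
  rw [div_eq_div_iff hne hne2]
  field_simp
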